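/- arXiv:1710.10482 — 5 statements merged into one kernel-verified Lean document; each statement's English description precedes it below -/
import Mathlib

section
/- (Result 1, direction (i)) Let (u*, v*, w*) be an optimal solution of the dual D(D) with optimal value θ_k^D = v* y_k + w*. If −u* x_k + v* y_k + w* ≤ 0, then (M u*, M v*, M w*) is feasible for the dual Problem (2) (the M = 1 dual with constraint u x_k = 1 and −u x_r + v y_r + w ≤ 0 for all r ∈ D), and consequently M·θ_k^D ≤ e_k^*, where e_k^* is the optimal value of Problem (2). -/
open Finset

/-- Feasibility for the primal problem P(S) (inputs scaled by M at DMU k). -/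
def PFeas {ι : Type*} [DecidableEq ι] {m n : ℕ} (S : Finset ι) (k : ι) (M : ℝ)
    (x : ι → Fin m → ℝ) (y : ι → Fin n → ℝ) (θ : ℝ) (lam : ι → ℝ) : Prop :=
  (∀ i, lam k * (M * x k i) + ∑ r ∈ S.erase k, lam r * x r i ≤ θ * (M * x k i)) ∧
  (∀ j, y k j ≤ lam k * y k j + ∑ r ∈ S.erase k, lam r * y r j) ∧
  (∑ r ∈ S, lam r = 1) ∧
  (∀ r ∈ S, 0 ≤ lam r)

/-- Feasibility for the dual problem D(D). -/
def DFeas {ι : Type*} [DecidableEq ι] {m n : ℕ} (D : Finset ι) (k : ι) (M : ℝ)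
    (x : ι → Fin m → ℝ) (y : ι → Fin n → ℝ)
    (u : Fin m → ℝ) (v : Fin n → ℝ) (w : ℝ) : Prop :=
  (∑ i, u i * (M * x k i)) = 1 ∧
  (∀ r ∈ D.erase k, -(∑ i, u i * x r i) + (∑ j, v j * y r j) + w ≤ 0) ∧
  (-(∑ i, u i * (M * x k i)) + (∑ j, v j * y k j) + w ≤ 0) ∧
  (∀ i, 0 ≤ u i) ∧ (∀ j, 0 ≤ v j)

/-- Feasibility for the M = 1 dual Problem (2). -/
def Feas2 {ι : Type*} {m n : ℕ} (D : Finset ι) (k : ι)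
    (x : ι → Fin m → ℝ) (y : ι → Fin n → ℝ)
    (u : Fin m → ℝ) (v : Fin n → ℝ) (w : ℝ) : Prop :=
  (∑ i, u i * x k i) = 1 ∧
  (∀ r ∈ D, -(∑ i, u i * x r i) + (∑ j, v j * y r j) + w ≤ 0) ∧
  (∀ i, 0 ≤ u i) ∧ (∀ j, 0 ≤ v j)

/-- Feasibility for the standard primal Problem (1). -/
def Feas1 {ι : Type*} {m n : ℕ} (D : Finset ι) (k : ι)
    (x : ι → Fin m → ℝ) (y : ι → Fin n → ℝ) (θ : ℝ) (lam : ι → ℝ) : Prop :=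
  (∀ i, ∑ r ∈ D, lam r * x r i ≤ θ * x k i) ∧
  (∀ j, y k j ≤ ∑ r ∈ D, lam r * y r j) ∧
  (∑ r ∈ D, lam r = 1) ∧
  (∀ r ∈ D, 0 ≤ lam r)


theorem stmt3 {ι : Type*} [DecidableEq ι] {m n : ℕ} (D : Finset ι) (k : ι) (hk : k ∈ D)
    (M : ℝ) (hM : 1 ≤ M) (x : ι → Fin m → ℝ) (y : ι → Fin n → ℝ)
    (hx : ∀ r ∈ D, ∀ i, 0 < x r i)
    (u v w : _) (hfeas : DFeas D k M x y u v w)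
    (θD : ℝ) (hval : θD = (∑ j, v j * y k j) + w)
    (hopt : IsGreatest {c : ℝ | ∃ u' : Fin m → ℝ, ∃ v' : Fin n → ℝ, ∃ w' : ℝ,
        DFeas D k M x y u' v' w' ∧ c = (∑ j, v' j * y k j) + w'} θD)
    (hcond : -(∑ i, u i * x k i) + (∑ j, v j * y k j) + w ≤ 0) :
    Feas2 D k x y (fun i => M * u i) (fun j => M * v j) (M * w) ∧
    ∀ e : ℝ, IsGreatest {c : ℝ | ∃ u' : Fin m → ℝ, ∃ v' : Fin n → ℝ, ∃ w' : ℝ,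
        Feas2 D k x y u' v' w' ∧ c = (∑ j, v' j * y k j) + w'} e →
      M * θD ≤ e := by
  obtain ⟨h1, h2, h3, hu, hv⟩ := hfeas
  have hM0 : (0:ℝ) ≤ M := le_trans zero_le_one hM
  have hfeas2 : Feas2 D k x y (fun i => M * u i) (fun j => M * v j) (M * w) := by
    refine ⟨?_, ?_, fun i => mul_nonneg hM0 (hu i), fun j => mul_nonneg hM0 (hv j)⟩
    · calc (∑ i, (M * u i) * x k i) = ∑ i, u i * (M * x k i) := by
            apply Finset.sum_congr rfl; intro i _; ring
        _ = 1 := h1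
    · intro r hr
      have key : ∀ z : ℝ, -(∑ i, u i * x r i) + (∑ j, v j * y r j) + z ≤ 0 →
          -(∑ i, (M * u i) * x r i) + (∑ j, (M * v j) * y r j) + M * z ≤ 0 := by
        intro z hz
        have := mul_le_mul_of_nonneg_left hz hM0
        have heq : -(∑ i, (M * u i) * x r i) + (∑ j, (M * v j) * y r j) + M * z
            = M * (-(∑ i, u i * x r i) + (∑ j, v j * y r j) + z) := by
          simp only [Finset.mul_sum, mul_add, mul_neg, mul_assoc]
        rw [heq]; linarith
      rcases eq_or_ne r k with rfl | hne
      · exact key w hcond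
      · exact key w (h2 r (Finset.mem_erase.mpr ⟨hne, hr⟩))
  refine ⟨hfeas2, fun e he => ?_⟩
  have hmem : M * θD ∈ {c : ℝ | ∃ u' : Fin m → ℝ, ∃ v' : Fin n → ℝ, ∃ w' : ℝ,
      Feas2 D k x y u' v' w' ∧ c = (∑ j, v' j * y k j) + w'} := by
    refine ⟨_, _, _, hfeas2, ?_⟩
    simp only [hval, Finset.mul_sum]
    ring_nf
    rw [Finset.mul_sum]
    ring_nf
  exact he.2 hmem
end

section
/- (Result 1) Let e_k^* be the optimal value of the M = 1 dual Problem (2) and θ_k^D the optimal value of D(D) attained at (u*, v*, w*). If −u* x_k + v* y_k + w* ≤ 0, then e_k^* = M·θ_k^D. -/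
open Finset

/-!
A solution of `D(D)` satisfying the extra condition at `k`, multiplied by `M`, is feasible for
Problem (2). Conversely a solution of Problem (2), divided by `M`, is feasible for `D(D)`: there its
constraint at `k` reads `v y_k + w ≤ M`, which follows from `v y_k + w ≤ 1` and `1 ≤ M`. Objective
values scale by the same factor, so each optimum bounds the other and `e = M θ`.
-/

lemma sum_smul_mul {α : Type*} [Fintype α] (c : ℝ) (u z : α → ℝ) :
    ∑ i, (c • u) i * z i = c * ∑ i, u i * z i := by
  simp only [Pi.smul_apply, smul_eq_mul, Finset.mul_sum, mul_assoc]

lemma sum_mul_const_mul {α : Type*} [Fintype α] (c : ℝ) (u z : α → ℝ) :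
    ∑ i, u i * (c * z i) = c * ∑ i, u i * z i := by
  simp only [Finset.mul_sum, mul_left_comm]

section Rescaling

variable {ι : Type*} [DecidableEq ι] {m n : ℕ} {D : Finset ι} {k : ι} {M : ℝ}
  {x : ι → Fin m → ℝ} {y : ι → Fin n → ℝ} {u : Fin m → ℝ} {v : Fin n → ℝ} {w : ℝ}

lemma Feas2.of_dFeas_smul (hM : 0 ≤ M) (h : DFeas D k M x y u v w)
    (hk : -(∑ i, u i * x k i) + (∑ j, v j * y k j) + w ≤ 0) :
    Feas2 D k x y (M • u) (M • v) (M * w) := by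
  obtain ⟨hnorm, hrest, -, hu, hv⟩ := h
  have hD : ∀ r ∈ D, -(∑ i, u i * x r i) + (∑ j, v j * y r j) + w ≤ 0 := by
    intro r hr
    by_cases hrk : r = k
    · exact hrk ▸ hk
    · exact hrest r (mem_erase.mpr ⟨hrk, hr⟩)
  refine ⟨?_, fun r hr => ?_, fun i => mul_nonneg hM (hu i), fun j => mul_nonneg hM (hv j)⟩
  · rwa [sum_smul_mul, ← sum_mul_const_mul]
  · rw [sum_smul_mul, sum_smul_mul]
    linarith [mul_nonpos_of_nonneg_of_nonpos hM (hD r hr)]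

lemma DFeas.of_feas2_smul_inv (hk : k ∈ D) (hM : 1 ≤ M) (h : Feas2 D k x y u v w) :
    DFeas D k M x y (M⁻¹ • u) (M⁻¹ • v) (M⁻¹ * w) := by
  obtain ⟨hnorm, hD, hu, hv⟩ := h
  have hM0 : 0 < M := one_pos.trans_le hM
  have hinv : 0 ≤ M⁻¹ := inv_nonneg.mpr hM0.le
  have hscaled : ∑ i, (M⁻¹ • u) i * (M * x k i) = 1 := by
    rw [sum_mul_const_mul, sum_smul_mul, hnorm, mul_inv_cancel_left₀ hM0.ne']
  refine ⟨hscaled, fun r hr => ?_, ?_, fun i => mul_nonneg hinv (hu i),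
    fun j => mul_nonneg hinv (hv j)⟩
  · rw [sum_smul_mul, sum_smul_mul]
    linarith [mul_nonpos_of_nonneg_of_nonpos hinv (hD r (mem_of_mem_erase hr))]
  · have hval : (∑ j, v j * y k j) + w ≤ M := by linarith [hD k hk]
    rw [hscaled, sum_smul_mul]
    linarith [inv_mul_le_one_of_le₀ hval hM0.le]

end Rescaling

theorem stmt5_general {ι : Type*} [DecidableEq ι] {m n : ℕ} (D : Finset ι) (k : ι) (hk : k ∈ D)
    (M : ℝ) (hM : 1 ≤ M) (x : ι → Fin m → ℝ) (y : ι → Fin n → ℝ)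
    (u : Fin m → ℝ) (v : Fin n → ℝ) (w : ℝ)
    (hfeas : DFeas D k M x y u v w)
    (θD : ℝ) (hval : θD = (∑ j, v j * y k j) + w)
    (hopt : IsGreatest {c : ℝ | ∃ u' : Fin m → ℝ, ∃ v' : Fin n → ℝ, ∃ w' : ℝ,
        DFeas D k M x y u' v' w' ∧ c = (∑ j, v' j * y k j) + w'} θD)
    (e : ℝ)
    (he : IsGreatest {c : ℝ | ∃ u' : Fin m → ℝ, ∃ v' : Fin n → ℝ, ∃ w' : ℝ,
        Feas2 D k x y u' v' w' ∧ c = (∑ j, v' j * y k j) + w'} e)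
    (hcond : -(∑ i, u i * x k i) + (∑ j, v j * y k j) + w ≤ 0) :
    e = M * θD := by
  have hM0 : 0 < M := one_pos.trans_le hM
  have hle : M * θD ≤ e :=
    he.2 ⟨M • u, M • v, M * w, Feas2.of_dFeas_smul hM0.le hfeas hcond, by
      rw [hval, sum_smul_mul]; ring⟩
  have hge : e ≤ M * θD := by
    obtain ⟨u', v', w', hfeas', rfl⟩ := he.1
    have h : M⁻¹ * ((∑ j, v' j * y k j) + w') ≤ θD :=
      hopt.2 ⟨M⁻¹ • u', M⁻¹ • v', M⁻¹ * w', DFeas.of_feas2_smul_inv hk hM hfeas', by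
        rw [sum_smul_mul]; ring⟩
    rwa [← div_eq_inv_mul, div_le_iff₀' hM0] at h
  exact le_antisymm hge hle

theorem stmt5 {ι : Type*} [DecidableEq ι] {m n : ℕ} (D : Finset ι) (k : ι) (hk : k ∈ D)
    (M : ℝ) (hM : 1 ≤ M) (x : ι → Fin m → ℝ) (y : ι → Fin n → ℝ)
    (hx : ∀ r ∈ D, ∀ i, 0 < x r i)
    (u : Fin m → ℝ) (v : Fin n → ℝ) (w : ℝ)
    (hfeas : DFeas D k M x y u v w)
    (θD : ℝ) (hval : θD = (∑ j, v j * y k j) + w)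
    (hopt : IsGreatest {c : ℝ | ∃ u' : Fin m → ℝ, ∃ v' : Fin n → ℝ, ∃ w' : ℝ,
        DFeas D k M x y u' v' w' ∧ c = (∑ j, v' j * y k j) + w'} θD)
    (e : ℝ)
    (he : IsGreatest {c : ℝ | ∃ u' : Fin m → ℝ, ∃ v' : Fin n → ℝ, ∃ w' : ℝ,
        Feas2 D k x y u' v' w' ∧ c = (∑ j, v' j * y k j) + w'} e)
    (hcond : -(∑ i, u i * x k i) + (∑ j, v j * y k j) + w ≤ 0) :
    e = M * θD :=
  stmt5_general D k hk M hM x y u v w hfeas θD hval hopt e he hcond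
end

section
/- (Result 2) Let (u*, v*, w*) be an optimal solution of the dual D(D) and set τ = v* y_k + w*. If −u* x_k + v* y_k + w* > 0, then τ M > 1, the point (M u*, v*/τ, w*/τ) is feasible for Problem (2), attains objective value 1 there, and hence e_k^* = 1. -/
open Finset

/-!
The optimal D(D) multipliers satisfy `M · u*x_k = 1` and `u*x_k < τ`, so `τ M > 1`. Rescaling
`u*` by `M` restores the normalisation `u x_k = 1` of Problem (2), and dividing `(v*, w*)` by `τ`
makes the objective exactly `1`; the constraints for `r ≠ k` survive because shrinking the output
side by `1/τ < M` is dominated by growing the input side by `M`. Since every feasible point of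
Problem (2) has value at most `1`, the optimum is `1`.
-/

theorem sum_const_mul_mul {n : ℕ} (c : ℝ) (u x : Fin n → ℝ) :
    ∑ i, c * u i * x i = c * ∑ i, u i * x i := by
  simp only [mul_assoc, Finset.mul_sum]

theorem sum_div_mul_add_div {n : ℕ} (v y : Fin n → ℝ) (w τ : ℝ) :
    (∑ j, v j / τ * y j) + w / τ = ((∑ j, v j * y j) + w) / τ := by
  rw [add_div, Finset.sum_div]
  simp only [div_mul_eq_mul_div]

section

variable {ι : Type*} {m n : ℕ} {D : Finset ι} {k : ι} {x : ι → Fin m → ℝ} {y : ι → Fin n → ℝ}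

theorem Feas2.value_le_one {u : Fin m → ℝ} {v : Fin n → ℝ} {w : ℝ}
    (h : Feas2 D k x y u v w) (hk : k ∈ D) : (∑ j, v j * y k j) + w ≤ 1 := by
  linarith [h.1, h.2.1 k hk]

theorem Feas2.isGreatest_one {u : Fin m → ℝ} {v : Fin n → ℝ} {w : ℝ}
    (h : Feas2 D k x y u v w) (hval : (∑ j, v j * y k j) + w = 1) (hk : k ∈ D) :
    IsGreatest {c : ℝ | ∃ u' : Fin m → ℝ, ∃ v' : Fin n → ℝ, ∃ w' : ℝ,
      Feas2 D k x y u' v' w' ∧ c = (∑ j, v' j * y k j) + w'} 1 := by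
  refine ⟨⟨u, v, w, h, hval.symm⟩, ?_⟩
  rintro c ⟨u', v', w', h', rfl⟩
  exact h'.value_le_one hk

variable [DecidableEq ι] {M : ℝ} {u : Fin m → ℝ} {v : Fin n → ℝ} {w : ℝ}

theorem DFeas.mul_input_eq_one (h : DFeas D k M x y u v w) : M * ∑ i, u i * x k i = 1 := by
  rw [← h.1, Finset.mul_sum]
  exact Finset.sum_congr rfl fun i _ => mul_left_comm M (u i) (x k i)

theorem DFeas.input_nonneg (h : DFeas D k M x y u v w) {r : ι} (hx : ∀ i, 0 ≤ x r i) :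
    0 ≤ ∑ i, u i * x r i :=
  Finset.sum_nonneg fun i _ => mul_nonneg (h.2.2.2.1 i) (hx i)

theorem DFeas.scale_pos (h : DFeas D k M x y u v w) (hxk : ∀ i, 0 ≤ x k i) : 0 < M := by
  by_contra! hM
  linarith [h.mul_input_eq_one, mul_nonpos_of_nonpos_of_nonneg hM (h.input_nonneg hxk)]

theorem DFeas.one_lt_value_mul (h : DFeas D k M x y u v w) (hxk : ∀ i, 0 ≤ x k i)
    (hcond : 0 < -(∑ i, u i * x k i) + (∑ j, v j * y k j) + w) :
    1 < ((∑ j, v j * y k j) + w) * M := by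
  have hM := h.scale_pos hxk
  calc (1 : ℝ) = (∑ i, u i * x k i) * M := by rw [← h.mul_input_eq_one, mul_comm]
    _ < ((∑ j, v j * y k j) + w) * M := by gcongr; linarith

theorem DFeas.feas2_rescale (h : DFeas D k M x y u v w) (hk : k ∈ D)
    (hx : ∀ r ∈ D, ∀ i, 0 ≤ x r i) {τ : ℝ} (hτ : τ = (∑ j, v j * y k j) + w) (hτM : 1 < τ * M) :
    Feas2 D k x y (fun i => M * u i) (fun j => v j / τ) (w / τ) := by
  have hMs := h.mul_input_eq_one
  have hM := h.scale_pos (hx k hk)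
  have hτpos : 0 < τ := pos_of_mul_pos_left (one_pos.trans hτM) hM.le
  obtain ⟨-, hD, -, hu, hv⟩ := id h
  refine ⟨by rw [sum_const_mul_mul, hMs], fun r hr => ?_, fun i => mul_nonneg hM.le (hu i),
    fun j => div_nonneg (hv j) hτpos.le⟩
  simp only [sum_const_mul_mul, add_assoc, sum_div_mul_add_div]
  rcases eq_or_ne r k with rfl | hrk
  · rw [← hτ, div_self hτpos.ne', hMs, neg_add_cancel]
  · have hA := h.input_nonneg (hx r hr)
    have hdom : (∑ j, v j * y r j) + w ≤ M * (∑ i, u i * x r i) * τ :=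
      calc (∑ j, v j * y r j) + w ≤ ∑ i, u i * x r i := by linarith [hD r (mem_erase.2 ⟨hrk, hr⟩)]
        _ ≤ τ * M * ∑ i, u i * x r i := le_mul_of_one_le_left hA hτM.le
        _ = M * (∑ i, u i * x r i) * τ := by ring
    linarith [(div_le_iff₀ hτpos).2 hdom]

end

theorem stmt6_general {ι : Type*} [DecidableEq ι] {m n : ℕ} (D : Finset ι) (k : ι) (hk : k ∈ D)
    (M : ℝ) (x : ι → Fin m → ℝ) (y : ι → Fin n → ℝ)
    (hx : ∀ r ∈ D, ∀ i, 0 < x r i)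
    (u : Fin m → ℝ) (v : Fin n → ℝ) (w : ℝ)
    (hfeas : DFeas D k M x y u v w)
    (τ : ℝ) (hτ : τ = (∑ j, v j * y k j) + w)
    (hcond : 0 < -(∑ i, u i * x k i) + (∑ j, v j * y k j) + w)
    (e : ℝ)
    (he : IsGreatest {c : ℝ | ∃ u' : Fin m → ℝ, ∃ v' : Fin n → ℝ, ∃ w' : ℝ,
        Feas2 D k x y u' v' w' ∧ c = (∑ j, v' j * y k j) + w'} e) :
    1 < τ * M ∧
    Feas2 D k x y (fun i => M * u i) (fun j => v j / τ) (w / τ) ∧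
    (∑ j, (v j / τ) * y k j) + w / τ = 1 ∧
    e = 1 := by
  have hx' : ∀ r ∈ D, ∀ i, 0 ≤ x r i := fun r hr i => (hx r hr i).le
  have hτM : 1 < τ * M := hτ ▸ hfeas.one_lt_value_mul (hx' k hk) hcond
  have hfeas2 := hfeas.feas2_rescale hk hx' hτ hτM
  have hval : (∑ j, (v j / τ) * y k j) + w / τ = 1 := by
    rw [sum_div_mul_add_div, ← hτ, div_self (left_ne_zero_of_mul (one_pos.trans hτM).ne')]
  exact ⟨hτM, hfeas2, hval, he.unique (hfeas2.isGreatest_one hval hk)⟩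

theorem stmt6 {ι : Type*} [DecidableEq ι] {m n : ℕ} (D : Finset ι) (k : ι) (hk : k ∈ D)
    (M : ℝ) (hM : 1 ≤ M) (x : ι → Fin m → ℝ) (y : ι → Fin n → ℝ)
    (hx : ∀ r ∈ D, ∀ i, 0 < x r i)
    (u : Fin m → ℝ) (v : Fin n → ℝ) (w : ℝ)
    (hfeas : DFeas D k M x y u v w)
    (hopt : IsGreatest {c : ℝ | ∃ u' : Fin m → ℝ, ∃ v' : Fin n → ℝ, ∃ w' : ℝ,
        DFeas D k M x y u' v' w' ∧ c = (∑ j, v' j * y k j) + w'}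
      ((∑ j, v j * y k j) + w))
    (τ : ℝ) (hτ : τ = (∑ j, v j * y k j) + w)
    (hcond : 0 < -(∑ i, u i * x k i) + (∑ j, v j * y k j) + w)
    (e : ℝ)
    (he : IsGreatest {c : ℝ | ∃ u' : Fin m → ℝ, ∃ v' : Fin n → ℝ, ∃ w' : ℝ,
        Feas2 D k x y u' v' w' ∧ c = (∑ j, v' j * y k j) + w'} e) :
    1 < τ * M ∧
    Feas2 D k x y (fun i => M * u i) (fun j => v j / τ) (w / τ) ∧
    (∑ j, (v j / τ) * y k j) + w / τ = 1 ∧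
    e = 1 :=
  stmt6_general D k hk M x y hx u v w hfeas τ hτ hcond e he
end

section
/- (Result 3) Let S ⊆ D with k ∈ S, let (θ̂, λ̂) be an optimal solution of P(S) and (û, v̂, ŵ) an optimal dual solution satisfying the KKT conditions for P(S). If −û x_t + v̂ y_t + ŵ ≤ 0 for all t ∈ D\S, then extending λ̂ by zeros on D\S gives an optimal solution of P(D); in particular θ_k^S = θ_k^D. -/
open Finset

/-!
Replacing `x k` by `M • x k` turns P(T) and its dual into the standard pair `Feas1`/`Feas2`.
For these the duality gap `θ - (v·y_k + w)` is the sum of the input slacks weighted by `u`, the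
output slacks weighted by `v`, and the dual slacks weighted by `-λ`; feasibility makes every term
nonnegative (weak duality) and complementary slackness makes every term vanish, so
`θ̂ = v̂·y_k + ŵ`. Condition (7) keeps `(û, v̂, ŵ)` dual feasible over all of `D`, so `θ̂`
bounds every value of P(D) from below, and it is attained by the zero extension of `λ̂`.
-/

section StandardLP

variable {ι : Type*} {m n : ℕ} (T : Finset ι) (k : ι) (x : ι → Fin m → ℝ) (y : ι → Fin n → ℝ)

lemma sum_mul_sum_mul_comm {κ : Type*} [Fintype κ] (c : κ → ℝ) (l : ι → ℝ) (b : ι → κ → ℝ) :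
    ∑ i, c i * ∑ r ∈ T, l r * b r i = ∑ r ∈ T, l r * ∑ i, c i * b r i := by
  simp only [mul_sum]
  rw [sum_comm]
  exact sum_congr rfl fun _ _ => sum_congr rfl fun _ _ => mul_left_comm _ _ _

lemma duality_gap_eq (θ : ℝ) (l : ι → ℝ) (u : Fin m → ℝ) (v : Fin n → ℝ) (w : ℝ) :
    θ * ∑ i, u i * x k i - (∑ j, v j * y k j + w) =
      ∑ i, u i * (θ * x k i - ∑ r ∈ T, l r * x r i)
      + ∑ j, v j * (∑ r ∈ T, l r * y r j - y k j)
      - ∑ r ∈ T, l r * (-(∑ i, u i * x r i) + ∑ j, v j * y r j + w)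
      + w * (∑ r ∈ T, l r - 1) := by
  simp only [mul_sub, mul_add, mul_neg, sum_sub_distrib, sum_add_distrib, sum_neg_distrib,
    sum_mul_sum_mul_comm, mul_left_comm (u _) θ, ← mul_sum, ← sum_mul]
  ring

variable {T k x y}

lemma Feas2.le_of_feas1 {θ : ℝ} {l : ι → ℝ} {u : Fin m → ℝ} {v : Fin n → ℝ} {w : ℝ}
    (hd : Feas2 T k x y u v w) (hp : Feas1 T k x y θ l) : ∑ j, v j * y k j + w ≤ θ := by
  obtain ⟨hux, hslack, hu, hv⟩ := hd
  obtain ⟨hin, hout, hsum, hl⟩ := hp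
  have hgap := duality_gap_eq T k x y θ l u v w
  rw [hux, hsum] at hgap
  have hin' : 0 ≤ ∑ i, u i * (θ * x k i - ∑ r ∈ T, l r * x r i) :=
    sum_nonneg fun i _ => mul_nonneg (hu i) (sub_nonneg.2 (hin i))
  have hout' : 0 ≤ ∑ j, v j * (∑ r ∈ T, l r * y r j - y k j) :=
    sum_nonneg fun j _ => mul_nonneg (hv j) (sub_nonneg.2 (hout j))
  have hslack' : ∑ r ∈ T, l r * (-(∑ i, u i * x r i) + ∑ j, v j * y r j + w) ≤ 0 :=
    sum_nonpos fun r hr => mul_nonpos_of_nonneg_of_nonpos (hl r hr) (hslack r hr)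
  linarith

lemma eq_dual_objective_of_slackness {θ : ℝ} {l : ι → ℝ} {u : Fin m → ℝ} {v : Fin n → ℝ}
    {w : ℝ} (hux : ∑ i, u i * x k i = 1) (hsum : ∑ r ∈ T, l r = 1)
    (hcs_in : ∑ i, u i * (θ * x k i - ∑ r ∈ T, l r * x r i) = 0)
    (hcs_out : ∑ j, v j * (∑ r ∈ T, l r * y r j - y k j) = 0)
    (hcs_lam : ∀ r ∈ T, l r * (-(∑ i, u i * x r i) + ∑ j, v j * y r j + w) = 0) :
    θ = ∑ j, v j * y k j + w := by
  have hgap := duality_gap_eq T k x y θ l u v w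
  rw [hux, hsum, hcs_in, hcs_out, sum_eq_zero hcs_lam] at hgap
  linarith

lemma Feas1.extend [DecidableEq ι] {D : Finset ι} {θ : ℝ} {l : ι → ℝ} (hTD : T ⊆ D)
    (h : Feas1 T k x y θ l) : Feas1 D k x y θ (fun r => if r ∈ T then l r else 0) := by
  have hsum_ext (g : ι → ℝ) :
      ∑ r ∈ D, (if r ∈ T then l r else 0) * g r = ∑ r ∈ T, l r * g r := by
    simp only [ite_mul, zero_mul, sum_ite_mem, inter_eq_right.2 hTD]
  obtain ⟨hin, hout, hsum, hl⟩ := h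
  refine ⟨fun i => ?_, fun j => ?_, ?_, fun r _ => ?_⟩
  · simpa only [hsum_ext] using hin i
  · simpa only [hsum_ext] using hout j
  · rwa [sum_ite_mem, inter_eq_right.2 hTD]
  · dsimp only
    split_ifs with hr
    exacts [hl r hr, le_rfl]

end StandardLP

section Rescaling

variable {ι : Type*} [DecidableEq ι] {m n : ℕ} {T : Finset ι} {k : ι} {M : ℝ}
  {x : ι → Fin m → ℝ} {y : ι → Fin n → ℝ}

def scaleAt (k : ι) (M : ℝ) (x : ι → Fin m → ℝ) : ι → Fin m → ℝ :=
  Function.update x k fun i => M * x k i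

@[simp] lemma scaleAt_self (i : Fin m) : scaleAt k M x k i = M * x k i := by
  simp [scaleAt]

lemma scaleAt_of_ne {r : ι} (hr : r ≠ k) : scaleAt k M x r = x r :=
  Function.update_of_ne hr _ _

lemma forall_mem_scaleAt (hk : k ∈ T) {P : (Fin m → ℝ) → ι → Prop}
    (hPk : P (fun i => M * x k i) k) (hP : ∀ r ∈ T.erase k, P (x r) r) :
    ∀ r ∈ T, P (scaleAt k M x r) r := by
  intro r hr
  rcases eq_or_ne r k with rfl | hrk
  · simpa only [scaleAt, Function.update_self] using hPk
  · rw [scaleAt_of_ne hrk]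
    exact hP r (mem_erase.2 ⟨hrk, hr⟩)

lemma sum_mul_eq_add_sum_erase {κ : Type*} (hk : k ∈ T) (l : ι → ℝ) (a : ι → κ → ℝ) (j : κ) :
    ∑ r ∈ T, l r * a r j = l k * a k j + ∑ r ∈ T.erase k, l r * a r j :=
  (add_sum_erase T (fun r => l r * a r j) hk).symm

lemma sum_mul_scaleAt (hk : k ∈ T) (l : ι → ℝ) (i : Fin m) :
    ∑ r ∈ T, l r * scaleAt k M x r i = l k * (M * x k i) + ∑ r ∈ T.erase k, l r * x r i := by
  rw [sum_mul_eq_add_sum_erase hk, scaleAt_self]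
  exact congrArg _ (sum_congr rfl fun r hr => by rw [scaleAt_of_ne (ne_of_mem_erase hr)])

lemma pFeas_iff_feas1_scaleAt (hk : k ∈ T) {θ : ℝ} {l : ι → ℝ} :
    PFeas T k M x y θ l ↔ Feas1 T k (scaleAt k M x) y θ l := by
  simp only [PFeas, Feas1, sum_mul_scaleAt hk, scaleAt_self, sum_mul_eq_add_sum_erase hk l y]

lemma PFeas.extend {D S : Finset ι} (hS : S ⊆ D) (hk : k ∈ S) {θ : ℝ} {l : ι → ℝ}
    (h : PFeas S k M x y θ l) : PFeas D k M x y θ (fun r => if r ∈ S then l r else 0) :=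
  (pFeas_iff_feas1_scaleAt (hS hk)).2 (((pFeas_iff_feas1_scaleAt hk).1 h).extend hS)

end Rescaling

theorem stmt9_general {ι : Type*} [DecidableEq ι] {m n : ℕ} (D S : Finset ι) (k : ι)
    (hS : S ⊆ D) (hk : k ∈ S)
    (M : ℝ) (x : ι → Fin m → ℝ) (y : ι → Fin n → ℝ)
    (θhat : ℝ) (lam : ι → ℝ) (u : Fin m → ℝ) (v : Fin n → ℝ) (w : ℝ)
    (hprimal : PFeas S k M x y θhat lam)
    (hdual : DFeas S k M x y u v w)
    -- complementary slackness
    (hcs1 : ∑ i, u i * (θhat * (M * x k i) -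
        (lam k * (M * x k i) + ∑ r ∈ S.erase k, lam r * x r i)) = 0)
    (hcs2 : ∑ j, v j * ((lam k * y k j + ∑ r ∈ S.erase k, lam r * y r j) - y k j) = 0)
    (hcs5 : ∀ r ∈ S.erase k,
        lam r * (-(∑ i, u i * x r i) + (∑ j, v j * y r j) + w) = 0)
    (hcs6 : lam k * (-(∑ i, u i * (M * x k i)) + (∑ j, v j * y k j) + w) = 0)
    -- Condition (7)
    (hcond : ∀ t ∈ D \ S, -(∑ i, u i * x t i) + (∑ j, v j * y t j) + w ≤ 0) :
    PFeas D k M x y θhat (fun r => if r ∈ S then lam r else 0) ∧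
    IsLeast {θ : ℝ | ∃ l : ι → ℝ, PFeas D k M x y θ l} θhat ∧
    ∀ θS θD : ℝ,
      IsLeast {θ : ℝ | ∃ l : ι → ℝ, PFeas S k M x y θ l} θS →
      IsLeast {θ : ℝ | ∃ l : ι → ℝ, PFeas D k M x y θ l} θD →
      θS = θD := by
  obtain ⟨hux, hdual_erase, hdual_k, hu, hv⟩ := hdual
  have hkD : k ∈ D := hS hk
  have hdualD : Feas2 D k (scaleAt k M x) y u v w := by
    refine ⟨by simpa only [scaleAt_self] using hux, ?_, hu, hv⟩
    refine forall_mem_scaleAt (P := fun z r => -(∑ i, u i * z i) + ∑ j, v j * y r j + w ≤ 0)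
      hkD hdual_k ?_
    intro r hr
    by_cases hrS : r ∈ S
    · exact hdual_erase r (mem_erase.2 ⟨ne_of_mem_erase hr, hrS⟩)
    · exact hcond r (mem_sdiff.2 ⟨mem_of_mem_erase hr, hrS⟩)
  have hobj : θhat = ∑ j, v j * y k j + w :=
    eq_dual_objective_of_slackness (x := scaleAt k M x) (u := u) (by simpa only [scaleAt_self] using hux) hprimal.2.2.1
      (by simpa only [scaleAt_self, sum_mul_scaleAt hk] using hcs1)
      (by simpa only [sum_mul_eq_add_sum_erase hk lam y] using hcs2)
      (forall_mem_scaleAt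
        (P := fun z r => lam r * (-(∑ i, u i * z i) + ∑ j, v j * y r j + w) = 0) hk hcs6 hcs5)
  have hleastD : IsLeast {θ : ℝ | ∃ l : ι → ℝ, PFeas D k M x y θ l} θhat :=
    ⟨⟨_, hprimal.extend hS hk⟩, fun θ ⟨l, hl⟩ =>
      hobj ▸ hdualD.le_of_feas1 ((pFeas_iff_feas1_scaleAt hkD).1 hl)⟩
  have hleastS : IsLeast {θ : ℝ | ∃ l : ι → ℝ, PFeas S k M x y θ l} θhat :=
    ⟨⟨lam, hprimal⟩, fun θ ⟨l, hl⟩ => hleastD.2 ⟨_, hl.extend hS hk⟩⟩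
  exact ⟨hprimal.extend hS hk, hleastD, fun θS θD hθS hθD =>
    (hθS.unique hleastS).trans (hleastD.unique hθD)⟩

theorem stmt9 {ι : Type*} [DecidableEq ι] {m n : ℕ} (D S : Finset ι) (k : ι)
    (hS : S ⊆ D) (hk : k ∈ S)
    (M : ℝ) (hM : 1 ≤ M) (x : ι → Fin m → ℝ) (y : ι → Fin n → ℝ)
    (θhat : ℝ) (lam : ι → ℝ) (u : Fin m → ℝ) (v : Fin n → ℝ) (w : ℝ)
    (hprimal : PFeas S k M x y θhat lam)
    (hdual : DFeas S k M x y u v w)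
    -- complementary slackness
    (hcs1 : ∑ i, u i * (θhat * (M * x k i) -
        (lam k * (M * x k i) + ∑ r ∈ S.erase k, lam r * x r i)) = 0)
    (hcs2 : ∑ j, v j * ((lam k * y k j + ∑ r ∈ S.erase k, lam r * y r j) - y k j) = 0)
    (hcs3 : w * ((∑ r ∈ S, lam r) - 1) = 0)
    (hcs4 : θhat * ((∑ i, u i * (M * x k i)) - 1) = 0)
    (hcs5 : ∀ r ∈ S.erase k,
        lam r * (-(∑ i, u i * x r i) + (∑ j, v j * y r j) + w) = 0)
    (hcs6 : lam k * (-(∑ i, u i * (M * x k i)) + (∑ j, v j * y k j) + w) = 0)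
    -- Condition (7)
    (hcond : ∀ t ∈ D \ S, -(∑ i, u i * x t i) + (∑ j, v j * y t j) + w ≤ 0) :
    PFeas D k M x y θhat (fun r => if r ∈ S then lam r else 0) ∧
    IsLeast {θ : ℝ | ∃ l : ι → ℝ, PFeas D k M x y θ l} θhat ∧
    ∀ θS θD : ℝ,
      IsLeast {θ : ℝ | ∃ l : ι → ℝ, PFeas S k M x y θ l} θS →
      IsLeast {θ : ℝ | ∃ l : ι → ℝ, PFeas D k M x y θ l} θD →
      θS = θD :=
  stmt9_general D S k hS hk M x y θhat lam u v w hprimal hdual hcs1 hcs2 hcs5 hcs6 hcond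
end

section
/- (Existence of a representative subset) There exists a subset S ⊆ D with k ∈ S and |S| ≤ m + n + 1 such that the optimal value of P(S) equals the optimal value of P(D). -/
/-!
Only the point `∑ λ_r (x_r, y_r)` (with `x_k` scaled by `M`) enters the constraints of `P(S)`, and
`λ` is a convex weight vector. By Carathéodory's theorem in `ℝ^m × ℝ^n`, the point of an optimal
solution of `P(D)` is a convex combination of at most `m + n + 1` of the points; `k` can be kept,
because an affine relation has coefficients of both signs and may be negated so that the
coefficient of `k` is nonnegative. Conversely a solution of `P(S)` extends by zero to one of `P(D)`.
-/

open Finset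

open Module

section PinnedCaratheodory

variable {ι 𝕜 V : Type*} [Field 𝕜] [AddCommGroup V] [Module 𝕜 V]

theorem exists_affine_relation_of_finrank_add_one_lt_card [FiniteDimensional 𝕜 V]
    {D : Finset ι} (w : ι → V) (hD : finrank 𝕜 V + 1 < #D) :
    ∃ d : ι → 𝕜, ∑ r ∈ D, d r = 0 ∧ ∑ r ∈ D, d r • w r = 0 ∧ ∃ r ∈ D, d r ≠ 0 := by
  have hdep : ¬ LinearIndepOn 𝕜 (fun r => (w r, (1 : 𝕜))) (D : Set ι) := fun hli => by
    have := hli.fintype_card_le_finrank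
    simp only [finrank_prod, finrank_self, Finset.coe_sort_coe, Fintype.card_coe] at this
    omega
  obtain ⟨d, hd, r, hr, hdr⟩ := not_linearIndepOn_finset_iff.1 hdep
  refine ⟨d, ?_, ?_, r, hr, hdr⟩
  · simpa [Prod.snd_sum] using congrArg Prod.snd hd
  · simpa [Prod.fst_sum] using congrArg Prod.fst hd

variable [LinearOrder 𝕜]

def IsConvexCombination (S : Finset ι) (μ : ι → 𝕜) (w : ι → V) (p : V) : Prop :=
  (∀ r ∈ S, 0 ≤ μ r) ∧ ∑ r ∈ S, μ r = 1 ∧ ∑ r ∈ S, μ r • w r = p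

namespace IsConvexCombination

variable {S D : Finset ι} {μ : ι → 𝕜} {w : ι → V} {p : V}

theorem indicator (h : IsConvexCombination S μ w p) (hSD : S ⊆ D) :
    IsConvexCombination D ((S : Set ι).indicator μ) w p := by
  obtain ⟨h0, h1, hp⟩ := h
  refine ⟨fun r _ => Set.indicator_nonneg (fun r hr => h0 r hr) r, ?_, ?_⟩
  · rwa [Finset.sum_indicator_subset μ hSD]
  · simp_rw [← Set.indicator_smul_apply_left]
    rwa [Finset.sum_indicator_subset _ hSD]

theorem erase [DecidableEq ι] (h : IsConvexCombination D μ w p) {r₀ : ι} (hr₀ : μ r₀ = 0) :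
    IsConvexCombination (D.erase r₀) μ w p := by
  obtain ⟨h0, h1, hp⟩ := h
  refine ⟨fun r hr => h0 r (Finset.mem_of_mem_erase hr), ?_, ?_⟩
  · rwa [Finset.sum_erase D hr₀]
  · rwa [Finset.sum_erase D (by simp [hr₀])]

theorem add_smul_relation (h : IsConvexCombination D μ w p) {d : ι → 𝕜}
    (hsum : ∑ r ∈ D, d r = 0) (hw : ∑ r ∈ D, d r • w r = 0) {t : 𝕜}
    (hnonneg : ∀ r ∈ D, 0 ≤ μ r + t * d r) :
    IsConvexCombination D (fun r => μ r + t * d r) w p := by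
  obtain ⟨-, h1, hp⟩ := h
  refine ⟨hnonneg, ?_, ?_⟩
  · rw [Finset.sum_add_distrib, ← Finset.mul_sum, hsum, h1, mul_zero, add_zero]
  · simp only [add_smul, mul_smul, Finset.sum_add_distrib, ← Finset.smul_sum, hw, hp,
      smul_zero, add_zero]

end IsConvexCombination

variable [IsStrictOrderedRing 𝕜]

theorem exists_affine_relation_nonneg_at_of_finrank_add_one_lt_card [FiniteDimensional 𝕜 V]
    {D : Finset ι} (k : ι) (w : ι → V) (hD : finrank 𝕜 V + 1 < #D) :
    ∃ d : ι → 𝕜, ∑ r ∈ D, d r = 0 ∧ ∑ r ∈ D, d r • w r = 0 ∧ 0 ≤ d k ∧ ∃ r ∈ D, d r < 0 := by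
  have exists_neg : ∀ d : ι → 𝕜, ∑ r ∈ D, d r = 0 → (∃ r ∈ D, d r ≠ 0) → ∃ r ∈ D, d r < 0 := by
    rintro d hsum ⟨r, hr, hdr⟩
    by_contra! hnonneg
    exact hdr ((Finset.sum_eq_zero_iff_of_nonneg hnonneg).1 hsum r hr)
  obtain ⟨d, hsum, hw, r, hr, hdr⟩ := exists_affine_relation_of_finrank_add_one_lt_card w hD
  rcases le_total 0 (d k) with hdk | hdk
  · exact ⟨d, hsum, hw, hdk, exists_neg d hsum ⟨r, hr, hdr⟩⟩
  · have hsum' : ∑ r ∈ D, -d r = 0 := by simp [hsum]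
    refine ⟨-d, hsum', by simp [neg_smul, hw], by simpa using hdk, exists_neg _ hsum' ?_⟩
    exact ⟨r, hr, by simpa using hdr⟩

namespace IsConvexCombination

variable {S D : Finset ι} {μ : ι → 𝕜} {w : ι → V} {p : V}

/-- Moving along the relation `d` until the first weight with `d r < 0` vanishes; the weight of
`k` only grows, so `k` is never the one removed. -/
theorem exists_erase [DecidableEq ι] (h : IsConvexCombination D μ w p) {k : ι} {d : ι → 𝕜}
    (hsum : ∑ r ∈ D, d r = 0) (hw : ∑ r ∈ D, d r • w r = 0) (hdk : 0 ≤ d k)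
    (hneg : ∃ r ∈ D, d r < 0) :
    ∃ r₀ ∈ D, r₀ ≠ k ∧ ∃ ν : ι → 𝕜, IsConvexCombination (D.erase r₀) ν w p := by
  obtain ⟨r₀, hr₀, hmin⟩ := (D.filter (d · < 0)).exists_min_image (fun r => μ r / -d r)
    (by simpa [Finset.filter_nonempty_iff] using hneg)
  obtain ⟨hr₀D, hdr₀⟩ := Finset.mem_filter.1 hr₀
  set t := μ r₀ / -d r₀
  have ht : 0 ≤ t := div_nonneg (h.1 r₀ hr₀D) (neg_nonneg.2 hdr₀.le)
  have hnonneg : ∀ r ∈ D, 0 ≤ μ r + t * d r := by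
    intro r hr
    rcases le_or_gt 0 (d r) with hdr | hdr
    · exact add_nonneg (h.1 r hr) (mul_nonneg ht hdr)
    · have := (le_div_iff₀ (neg_pos.2 hdr)).1 (hmin r (Finset.mem_filter.2 ⟨hr, hdr⟩))
      linarith
  have hvanish : μ r₀ + t * d r₀ = 0 := by
    simp only [t]
    field_simp [hdr₀.ne]
    ring
  exact ⟨r₀, hr₀D, fun hk => (hdr₀.trans_le (hk ▸ hdk)).false, _,
    (h.add_smul_relation hsum hw hnonneg).erase hvanish⟩

theorem exists_subset_card_le [FiniteDimensional 𝕜 V] [DecidableEq ι] {k : ι} (hk : k ∈ D)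
    (h : IsConvexCombination D μ w p) :
    ∃ S ⊆ D, k ∈ S ∧ #S ≤ finrank 𝕜 V + 1 ∧ ∃ ν : ι → 𝕜, IsConvexCombination S ν w p := by
  induction D using Finset.strongInduction generalizing μ with
  | H D ih =>
  by_cases hD : #D ≤ finrank 𝕜 V + 1
  · exact ⟨D, subset_rfl, hk, hD, μ, h⟩
  obtain ⟨d, hsum, hw, hdk, hneg⟩ :=
    exists_affine_relation_nonneg_at_of_finrank_add_one_lt_card k w (not_le.1 hD)
  obtain ⟨r₀, hr₀, hr₀k, ν, hν⟩ := h.exists_erase hsum hw hdk hneg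
  obtain ⟨S, hS, hkS, hcard, hS'⟩ :=
    ih _ (Finset.erase_ssubset hr₀) (Finset.mem_erase.2 ⟨hr₀k.symm, hk⟩) hν
  exact ⟨S, hS.trans (D.erase_subset r₀), hkS, hcard, hS'⟩

end IsConvexCombination

end PinnedCaratheodory

section DEA

variable {ι : Type*} [DecidableEq ι] {m n : ℕ}

def dmuPoint (k : ι) (M : ℝ) (x : ι → Fin m → ℝ) (y : ι → Fin n → ℝ) (r : ι) :
    (Fin m → ℝ) × (Fin n → ℝ) :=
  (if r = k then M • x r else x r, y r)

theorem pFeas_iff {S : Finset ι} {k : ι} (hk : k ∈ S) {M θ : ℝ} {x : ι → Fin m → ℝ}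
    {y : ι → Fin n → ℝ} {lam : ι → ℝ} :
    PFeas S k M x y θ lam ↔ ∃ p, IsConvexCombination S lam (dmuPoint k M x y) p ∧
      p.1 ≤ θ • M • x k ∧ y k ≤ p.2 := by
  have hsum : ∑ r ∈ S, lam r • dmuPoint k M x y r =
      lam k • (M • x k, y k) + ∑ r ∈ S.erase k, lam r • (x r, y r) := by
    rw [← S.add_sum_erase _ hk]
    congr 1
    · simp [dmuPoint]
    · exact Finset.sum_congr rfl fun r hr => by simp [dmuPoint, Finset.ne_of_mem_erase hr]
  have hfst : ∀ i, (∑ r ∈ S, lam r • dmuPoint k M x y r).1 i =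
      lam k * (M * x k i) + ∑ r ∈ S.erase k, lam r * x r i := by
    simp [hsum, Prod.fst_sum, Finset.sum_apply]
  have hsnd : ∀ j, (∑ r ∈ S, lam r • dmuPoint k M x y r).2 j =
      lam k * y k j + ∑ r ∈ S.erase k, lam r * y r j := by
    simp [hsum, Prod.snd_sum, Finset.sum_apply]
  constructor
  · rintro ⟨hx, hy, h1, h0⟩
    refine ⟨_, ⟨h0, h1, rfl⟩, fun i => ?_, fun j => ?_⟩
    · simpa [hfst, mul_assoc] using hx i
    · simpa [hsnd] using hy j
  · rintro ⟨p, ⟨h0, h1, rfl⟩, hx, hy⟩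
    refine ⟨fun i => ?_, fun j => ?_, h1, h0⟩
    · simpa [hfst, mul_assoc] using hx i
    · simpa [hsnd] using hy j

theorem PFeas.indicator {S D : Finset ι} (hSD : S ⊆ D) {k : ι} (hk : k ∈ S) {M θ : ℝ}
    {x : ι → Fin m → ℝ} {y : ι → Fin n → ℝ} {lam : ι → ℝ} (h : PFeas S k M x y θ lam) :
    PFeas D k M x y θ ((S : Set ι).indicator lam) := by
  obtain ⟨p, hp, hdom⟩ := (pFeas_iff hk).1 h
  exact (pFeas_iff (hSD hk)).2 ⟨p, hp.indicator hSD, hdom⟩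

end DEA

theorem stmt16_general {ι : Type*} [DecidableEq ι] {m n : ℕ} (D : Finset ι) (k : ι) (hk : k ∈ D)
    (M : ℝ) (x : ι → Fin m → ℝ) (y : ι → Fin n → ℝ)
    (θD : ℝ)
    (hθD : IsLeast {θ : ℝ | ∃ lam : ι → ℝ, PFeas D k M x y θ lam} θD) :
    ∃ S : Finset ι, S ⊆ D ∧ k ∈ S ∧ S.card ≤ m + n + 1 ∧
      IsLeast {θ : ℝ | ∃ lam : ι → ℝ, PFeas S k M x y θ lam} θD := by
  obtain ⟨lam, hlam⟩ := hθD.1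
  obtain ⟨p, hp, hdom⟩ := (pFeas_iff hk).1 hlam
  obtain ⟨S, hSD, hkS, hcard, μ, hμ⟩ := hp.exists_subset_card_le hk
  have hdim : finrank ℝ ((Fin m → ℝ) × (Fin n → ℝ)) = m + n := by simp
  refine ⟨S, hSD, hkS, hdim ▸ hcard, ⟨μ, (pFeas_iff hkS).2 ⟨p, hμ, hdom⟩⟩, ?_⟩
  rintro θ ⟨ν, hν⟩
  exact hθD.2 ⟨_, hν.indicator hSD hkS⟩

theorem stmt16 {ι : Type*} [DecidableEq ι] {m n : ℕ} (D : Finset ι) (k : ι) (hk : k ∈ D)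
    (M : ℝ) (hM : 1 ≤ M) (x : ι → Fin m → ℝ) (y : ι → Fin n → ℝ)
    (θD : ℝ)
    (hθD : IsLeast {θ : ℝ | ∃ lam : ι → ℝ, PFeas D k M x y θ lam} θD) :
    ∃ S : Finset ι, S ⊆ D ∧ k ∈ S ∧ S.card ≤ m + n + 1 ∧
      IsLeast {θ : ℝ | ∃ lam : ι → ℝ, PFeas S k M x y θ lam} θD :=
  stmt16_general D k hk M x y θD hθD
end
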